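/- Normal and tangential components and signs of the velocity gradient of the shock function. In the setting of the previous gradient formula — γ > 1, h(s) := ((γ−1)s/γ)^{1/(γ−1)}, c(ρ) := √(γρ^{γ−1}), ψ^I(ξ) := a + v^I·ξ, g(v,ξ) := (h(−ψ^I(ξ)+v·ξ−½|v|²)(v−ξ) − ρ^I(v^I−ξ))·(v^I−v)/|v^I−v|, and at a point (v₀, ξ) with v₀ ≠ v^I and s₀ := −ψ^I(ξ)+v₀·ξ−½|v₀|² > 0, with ρ := h(s₀), c := c(ρ), z := v₀−ξ, n := (v^I−v₀)/|v^I−v₀|, t := n rotated 90° counterclockwise — the gradient g_v := ∇_v g(v₀,ξ) satisfies: (a) g_v·n = ρ(1 − ((z·n)/c)²); (b) g_v·t = −(z·t)·(ρ(z·n)/c² + (ρ−ρ^I)/|v^I−v₀|); here (v^I−ξ)·t = z·t automatically. Consequently, if 0 < z·n < c and ρ > ρ^I > 0, then g_v·n > 0 (in particular g_v ≠ 0) and the sign of g_v·t is the opposite of the sign of z·t. -/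

import Mathlib

/-!
Write `g(v) = ⟪F(v), n(v)⟫` with the mass flux `F(v) = h(s(v)) (v - ξ) - ρ^I (v^I - ξ)` and the unit
normal `n(v) = (v^I - v) / |v^I - v|`. Bernoulli's law gives `∇s = ξ - v = -z` and `h' = ρ / c²`, so
`DF = ρ I - (ρ / c²) z ⊗ z`, while `Dn = -(I - n ⊗ n) / |v^I - v|`. Hence
`g_v = ρ n - (ρ / c²) (z·n) z - (F - (F·n) n) / |v^I - v|`.
Pairing with `n` kills the last term and gives (a); pairing with `t` gives (b), because
`v^I - ξ = z + |v^I - v₀| n` makes `F·t = (ρ - ρ^I) (z·t)`. The signs then follow from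
`0 < z·n < c` and `ρ > ρ^I`.
-/

open InnerProductSpace

noncomputable section

abbrev E2 : Type := EuclideanSpace ℝ (Fin 2)

def vec2 (a b : ℝ) : E2 := (WithLp.equiv 2 (Fin 2 → ℝ)).symm ![a, b]

/-- Rotation by 90° counterclockwise. -/
def rot90 (v : E2) : E2 := vec2 (-(v 1)) (v 0)

/-- h(s) = ((γ−1)s/γ)^(1/(γ−1)), the inverse of π(ρ) = γρ^(γ−1)/(γ−1). -/
def hFun (γ s : ℝ) : ℝ := ((γ - 1) * s / γ) ^ (1 / (γ - 1))

/-- Sound speed c(ρ) = √(γρ^(γ−1)). -/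
def soundSpeed (γ ρ : ℝ) : ℝ := Real.sqrt (γ * ρ ^ (γ - 1))

/-- The shock function g(v,ξ). -/
def gFun (γ : ℝ) (vI : E2) (ρI a : ℝ) (v ξ : E2) : ℝ :=
  ⟪hFun γ (-(a + ⟪vI, ξ⟫_ℝ) + ⟪v, ξ⟫_ℝ - ‖v‖ ^ 2 / 2) • (v - ξ) - ρI • (vI - ξ),
    ‖vI - v‖⁻¹ • (vI - v)⟫_ℝ

lemma inner_rot90_self (v : E2) : ⟪v, rot90 v⟫_ℝ = 0 := by
  simp only [rot90, vec2, WithLp.equiv_symm_apply, PiLp.inner_apply, RCLike.inner_apply,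
    Real.ringHom_apply, Fin.sum_univ_two, Matrix.cons_val_zero, Matrix.cons_val_one,
    Matrix.cons_val_fin_one]
  ring

lemma Real.sign_mul_of_pos (x : ℝ) {k : ℝ} (hk : 0 < k) : Real.sign (x * k) = Real.sign x := by
  rcases lt_trichotomy x 0 with hx | rfl | hx
  · rw [Real.sign_of_neg hx, Real.sign_of_neg (mul_neg_of_neg_of_pos hx hk)]
  · simp
  · rw [Real.sign_of_pos hx, Real.sign_of_pos (mul_pos hx hk)]

section Polytropic

variable {γ s : ℝ}

lemma hFun_pos (hγ : 1 < γ) (hs : 0 < s) : 0 < hFun γ s := by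
  have : 0 < γ - 1 := by linarith
  unfold hFun; positivity

lemma hFun_rpow (hγ : 1 < γ) (hs : 0 ≤ s) : hFun γ s ^ (γ - 1) = (γ - 1) * s / γ := by
  have hγ1 : 0 < γ - 1 := by linarith
  have hγ0 : 0 < γ := by linarith
  rw [hFun, ← Real.rpow_mul (by positivity), one_div_mul_cancel hγ1.ne', Real.rpow_one]

lemma soundSpeed_pos {ρ : ℝ} (hγ : 0 < γ) (hρ : 0 < ρ) : 0 < soundSpeed γ ρ := by
  unfold soundSpeed; positivity

lemma soundSpeed_hFun_sq (hγ : 1 < γ) (hs : 0 ≤ s) : soundSpeed γ (hFun γ s) ^ 2 = (γ - 1) * s := by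
  have hγ1 : 0 < γ - 1 := by linarith
  rw [soundSpeed, hFun_rpow hγ hs, Real.sq_sqrt (by positivity)]
  field_simp

lemma hasDerivAt_hFun (hγ : 1 < γ) (hs : 0 < s) :
    HasDerivAt (hFun γ) (hFun γ s / soundSpeed γ (hFun γ s) ^ 2) s := by
  have hγ1 : 0 < γ - 1 := by linarith
  have hb : 0 < (γ - 1) * s / γ := by positivity
  have hlin : HasDerivAt (fun s : ℝ => (γ - 1) * s / γ) ((γ - 1) / γ) s := by
    simpa using ((hasDerivAt_id s).const_mul (γ - 1)).div_const γ
  refine ((Real.hasDerivAt_rpow_const (p := 1 / (γ - 1)) (Or.inl hb.ne')).comp s hlin).congr_deriv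
    ?_
  rw [soundSpeed_hFun_sq hγ hs.le, hFun, Real.rpow_sub hb, Real.rpow_one]
  field_simp

end Polytropic

section InnerProductSpace

variable {E : Type*} [NormedAddCommGroup E] [InnerProductSpace ℝ E]

lemma hasFDerivAt_const_add_inner_sub_half_norm_sq (C : ℝ) (ξ v : E) :
    HasFDerivAt (fun v : E => C + ⟪v, ξ⟫_ℝ - ‖v‖ ^ 2 / 2) (innerSL ℝ (ξ - v)) v := by
  have hinner : HasFDerivAt (fun v : E => ⟪v, ξ⟫_ℝ) (innerSL ℝ ξ) v := by
    have : (fun v : E => ⟪v, ξ⟫_ℝ) = innerSL ℝ ξ := by ext; simp [real_inner_comm]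
    exact this ▸ (innerSL ℝ ξ).hasFDerivAt
  have hsq := (hasStrictFDerivAt_norm_sq v).hasFDerivAt.mul_const (1 / 2 : ℝ)
  simp only [mul_one_div] at hsq
  exact ((hinner.const_add C).sub hsq).congr_fderiv (by ext; simp)

lemma hasFDerivAt_norm {y : E} (hy : y ≠ 0) :
    HasFDerivAt (fun y : E => ‖y‖) (‖y‖⁻¹ • innerSL ℝ y) y := by
  have h := (hasStrictFDerivAt_norm_sq y).hasFDerivAt.sqrt (by simpa using hy)
  simp only [Real.sqrt_sq (norm_nonneg _)] at h
  exact h.congr_fderiv (by ext; simp; ring)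

lemma hasFDerivAt_inv_norm_smul {y : E} (hy : y ≠ 0) :
    HasFDerivAt (fun y : E => ‖y‖⁻¹ • y)
      (‖y‖⁻¹ • (ContinuousLinearMap.id ℝ E -
        (innerSL ℝ (‖y‖⁻¹ • y)).smulRight (‖y‖⁻¹ • y))) y := by
  have hr : ‖y‖ ≠ 0 := norm_ne_zero_iff.mpr hy
  refine (((hasDerivAt_inv hr).comp_hasFDerivAt y (hasFDerivAt_norm hy)).smul
    (hasFDerivAt_id y)).congr_fderiv ?_
  ext w
  simp only [Function.comp_apply, neg_smul, id_eq, add_apply, smul_apply, neg_apply, sub_apply,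
    ContinuousLinearMap.id_apply, ContinuousLinearMap.smulRight_apply, coe_innerSL_apply,
    smul_eq_mul, map_smul]
  module

lemma inner_normal_of_gradient_formula {ρ c r : ℝ} {g n z F : E}
    (hg : g = ρ • n - (ρ / c ^ 2 * ⟪z, n⟫_ℝ) • z - r⁻¹ • (F - ⟪F, n⟫_ℝ • n)) (hn : ‖n‖ = 1) :
    ⟪g, n⟫_ℝ = ρ * (1 - (⟪z, n⟫_ℝ / c) ^ 2) := by
  simp only [hg, inner_sub_left, real_inner_smul_left, real_inner_self_eq_norm_sq, hn]
  ring

lemma inner_tangent_of_gradient_formula {ρ ρI c r : ℝ} {g n t z p : E}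
    (hg : g = ρ • n - (ρ / c ^ 2 * ⟪z, n⟫_ℝ) • z -
      r⁻¹ • ((ρ • z - ρI • p) - ⟪ρ • z - ρI • p, n⟫_ℝ • n))
    (hnt : ⟪n, t⟫_ℝ = 0) (hpt : ⟪p, t⟫_ℝ = ⟪z, t⟫_ℝ) :
    ⟪g, t⟫_ℝ = -⟪z, t⟫_ℝ * (ρ * ⟪z, n⟫_ℝ / c ^ 2 + (ρ - ρI) / r) := by
  simp only [hg, inner_sub_left, real_inner_smul_left, hnt, hpt]
  ring

end InnerProductSpace

lemma gradient_gFun {γ ρI a s ρ c : ℝ} {vI ξ v z n : E2} (hγ : 1 < γ) (hne : v ≠ vI)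
    (hs : s = -(a + ⟪vI, ξ⟫_ℝ) + ⟪v, ξ⟫_ℝ - ‖v‖ ^ 2 / 2) (hs_pos : 0 < s)
    (hρ : ρ = hFun γ s) (hc : c = soundSpeed γ ρ) (hz : z = v - ξ)
    (hn : n = ‖vI - v‖⁻¹ • (vI - v)) :
    gradient (fun v => gFun γ vI ρI a v ξ) v =
      ρ • n - (ρ / c ^ 2 * ⟪z, n⟫_ℝ) • z -
        ‖vI - v‖⁻¹ • ((ρ • z - ρI • (vI - ξ)) - ⟪ρ • z - ρI • (vI - ξ), n⟫_ℝ • n) := by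
  have hdir : HasFDerivAt (fun v : E2 => ‖vI - v‖⁻¹ • (vI - v)) _ v :=
    (hasFDerivAt_inv_norm_smul (sub_ne_zero.2 hne.symm)).comp v
      ((hasFDerivAt_id v).const_sub vI)
  have hdens : HasFDerivAt (fun v : E2 => hFun γ (-(a + ⟪vI, ξ⟫_ℝ) + ⟪v, ξ⟫_ℝ - ‖v‖ ^ 2 / 2)) _ v :=
    (hasDerivAt_hFun hγ hs_pos).comp_hasFDerivAt_of_eq v
      (hasFDerivAt_const_add_inner_sub_half_norm_sq _ ξ v) hs
  have hg : HasFDerivAt (fun v => gFun γ vI ρI a v ξ) _ v :=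
    ((hdens.smul ((hasFDerivAt_id v).sub_const ξ)).sub_const (ρI • (vI - ξ))).inner ℝ hdir
  have hz' : ξ - v = -z := by rw [hz, neg_sub]
  refine ext_inner_right ℝ fun w => ?_
  rw [inner_gradient_left, hg.fderiv]
  simp only [id_eq, Pi.smul_apply', ← hs, ← hρ, ← hc, ← hz, ← hn, hz']
  simp only [ContinuousLinearMap.comp_neg, ContinuousLinearMap.comp_id,
    ContinuousLinearMap.comp_apply, ContinuousLinearMap.prod_apply, fderivInnerCLM_apply,
    add_apply, smul_apply, neg_apply, sub_apply, ContinuousLinearMap.id_apply,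
    ContinuousLinearMap.smulRight_apply, coe_innerSL_apply, smul_eq_mul, inner_neg_right, inner_add_right, inner_sub_left, inner_sub_right,
    real_inner_smul_right, real_inner_comm]
  ring

theorem shock_function_gradient_components (γ : ℝ) (hγ : 1 < γ)
    (vI : E2) (ρI a : ℝ) (ξ v₀ : E2) (hne : v₀ ≠ vI)
    (s₀ : ℝ) (hs₀ : s₀ = -(a + ⟪vI, ξ⟫_ℝ) + ⟪v₀, ξ⟫_ℝ - ‖v₀‖ ^ 2 / 2)
    (hs₀pos : 0 < s₀)
    (ρ c : ℝ) (hρ : ρ = hFun γ s₀) (hc : c = soundSpeed γ ρ)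
    (z nv tv : E2) (hz : z = v₀ - ξ)
    (hn : nv = ‖vI - v₀‖⁻¹ • (vI - v₀)) (ht : tv = rot90 nv)
    (gv : E2) (hgv : gv = gradient (fun v => gFun γ vI ρI a v ξ) v₀) :
    ⟪gv, nv⟫_ℝ = ρ * (1 - (⟪z, nv⟫_ℝ / c) ^ 2) ∧
    ⟪gv, tv⟫_ℝ = -⟪z, tv⟫_ℝ * (ρ * ⟪z, nv⟫_ℝ / c ^ 2 + (ρ - ρI) / ‖vI - v₀‖) ∧
    ⟪vI - ξ, tv⟫_ℝ = ⟪z, tv⟫_ℝ ∧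
    (0 < ⟪z, nv⟫_ℝ → ⟪z, nv⟫_ℝ < c → ρI < ρ → 0 < ρI →
      0 < ⟪gv, nv⟫_ℝ ∧ gv ≠ 0 ∧ Real.sign ⟪gv, tv⟫_ℝ = -Real.sign ⟪z, tv⟫_ℝ) := by
  have hr : 0 < ‖vI - v₀‖ := norm_pos_iff.2 (sub_ne_zero.2 hne.symm)
  have hρ_pos : 0 < ρ := hρ ▸ hFun_pos hγ hs₀pos
  have hc_pos : 0 < c := hc ▸ soundSpeed_pos (by linarith) hρ_pos
  have hnv : ‖nv‖ = 1 := by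
    rw [hn, norm_smul, norm_inv, norm_norm, inv_mul_cancel₀ hr.ne']
  have hnt : ⟪nv, tv⟫_ℝ = 0 := ht ▸ inner_rot90_self nv
  have hflow_t : ⟪vI - ξ, tv⟫_ℝ = ⟪z, tv⟫_ℝ := by
    have hflow : vI - ξ = z + ‖vI - v₀‖ • nv := by
      rw [hz, hn, smul_inv_smul₀ hr.ne']
      abel
    rw [hflow, inner_add_left, real_inner_smul_left, hnt, mul_zero, add_zero]
  have hgrad := hgv.trans (gradient_gFun hγ hne hs₀ hs₀pos hρ hc hz hn)
  have hnormal := inner_normal_of_gradient_formula hgrad hnv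
  have htangent := inner_tangent_of_gradient_formula hgrad hnt hflow_t
  refine ⟨hnormal, htangent, hflow_t, fun hzn hzc hρI _ => ?_⟩
  have hgn : 0 < ⟪gv, nv⟫_ℝ := by
    rw [hnormal]
    refine mul_pos hρ_pos (sub_pos.2 (pow_lt_one₀ (div_pos hzn hc_pos).le ?_ two_ne_zero))
    exact (div_lt_one hc_pos).2 hzc
  have hK : 0 < ρ * ⟪z, nv⟫_ℝ / c ^ 2 + (ρ - ρI) / ‖vI - v₀‖ :=
    add_pos (by positivity) (div_pos (sub_pos.2 hρI) hr)
  refine ⟨hgn, fun h => by simp [h] at hgn, ?_⟩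
  rw [htangent, Real.sign_mul_of_pos _ hK, Real.sign_neg]

end
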